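/- Let z₁, z₁' ∈ ℂ with z₁ ∉ {0,1} and z₁' ∉ {0,1}. Define z₃ = −(1 − z₁ − z₁')² / (z₁(1 − z₁)(1 − z₁')) and z₃' = −(1 − z₁ − z₁')² / (z₁'(1 − z₁)(1 − z₁')). Then the equality (z₁ − 1)(z₁' − 1)(z₃ − 1)(z₃' − 1) = z₁·z₁' holds if and only if p(z₁, z₁')·(z₁ + z₁' − 1) = 0, where p(u,v) = v³u + v²u² + vu³ − v² − 3vu − u² + 2v + 2u − 1. -/

import Mathlib

/-!
Writing `z₃ - 1` and `z₃' - 1` over their common denominators, the edge equation becomes the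
polynomial equation `A · B = u² v² (1 - u) (1 - v)` with `A = (1 - u - v)² + u (1 - u) (1 - v)`
and `B = (1 - u - v)² + v (1 - u) (1 - v)`; the difference of its two sides factors as
`p(u, v) · (u + v - 1)`.
-/

section

variable {K : Type*} [Field K]

theorem edge_equation_iff_cleared {u v : K} (hu0 : u ≠ 0) (hu1 : u ≠ 1) (hv0 : v ≠ 0)
    (hv1 : v ≠ 1) :
    (u - 1) * (v - 1) * (-(1 - u - v) ^ 2 / (u * (1 - u) * (1 - v)) - 1) *
        (-(1 - u - v) ^ 2 / (v * (1 - u) * (1 - v)) - 1) = u * v ↔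
      ((1 - u - v) ^ 2 + u * (1 - u) * (1 - v)) * ((1 - u - v) ^ 2 + v * (1 - u) * (1 - v)) =
        u ^ 2 * v ^ 2 * (1 - u) * (1 - v) := by
  have hu1' : 1 - u ≠ 0 := sub_ne_zero.mpr hu1.symm
  have hv1' : 1 - v ≠ 0 := sub_ne_zero.mpr hv1.symm
  have hden : u * v * (1 - u) * (1 - v) ≠ 0 := by simp [*]
  have hlhs : (u - 1) * (v - 1) * (-(1 - u - v) ^ 2 / (u * (1 - u) * (1 - v)) - 1) *
        (-(1 - u - v) ^ 2 / (v * (1 - u) * (1 - v)) - 1) =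
      ((1 - u - v) ^ 2 + u * (1 - u) * (1 - v)) * ((1 - u - v) ^ 2 + v * (1 - u) * (1 - v)) /
        (u * v * (1 - u) * (1 - v)) := by
    field_simp
    ring
  rw [hlhs, div_eq_iff hden]
  constructor <;> intro h <;> linear_combination h

theorem cleared_edge_equation_sub_eq (u v : K) :
    ((1 - u - v) ^ 2 + u * (1 - u) * (1 - v)) * ((1 - u - v) ^ 2 + v * (1 - u) * (1 - v)) -
        u ^ 2 * v ^ 2 * (1 - u) * (1 - v) =
      (v ^ 3 * u + v ^ 2 * u ^ 2 + v * u ^ 3 - v ^ 2 - 3 * v * u - u ^ 2 + 2 * v + 2 * u - 1) *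
        (u + v - 1) := by
  ring

end

theorem six_two_two_completeness_locus (z₁ z₁' : ℂ)
    (h₁0 : z₁ ≠ 0) (h₁1 : z₁ ≠ 1) (h₁'0 : z₁' ≠ 0) (h₁'1 : z₁' ≠ 1)
    (z₃ z₃' : ℂ)
    (hz₃ : z₃ = -(1 - z₁ - z₁') ^ 2 / (z₁ * (1 - z₁) * (1 - z₁')))
    (hz₃' : z₃' = -(1 - z₁ - z₁') ^ 2 / (z₁' * (1 - z₁) * (1 - z₁'))) :
    (z₁ - 1) * (z₁' - 1) * (z₃ - 1) * (z₃' - 1) = z₁ * z₁' ↔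
      (z₁' ^ 3 * z₁ + z₁' ^ 2 * z₁ ^ 2 + z₁' * z₁ ^ 3 - z₁' ^ 2 - 3 * z₁' * z₁ - z₁ ^ 2 +
          2 * z₁' + 2 * z₁ - 1) * (z₁ + z₁' - 1) = 0 := by
  rw [hz₃, hz₃', edge_equation_iff_cleared h₁0 h₁1 h₁'0 h₁'1, ← sub_eq_zero,
    cleared_edge_equation_sub_eq]
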